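/- Let A, B, C, D, E, F be real (n-4)×(n-4) matrices such that the block matrix [[B, -F, -C, -D], [F, B, D, -C], [-Cᵀ, Dᵀ, A, -E], [-Dᵀ, -Cᵀ, E, A]] is positive semi-definite. Then tr(AB) + tr(EF) - tr(C²) - tr(D²) ≥ 0. -/

import Mathlib

/-!
Let `M` be the block matrix, `K = diag(1, -1)` and `J = [[0, K], [-K, 0]]`. Then `J M Jᵀ` is again
positive semidefinite, and the trace of a product of two positive semidefinite matrices is
nonnegative. Block multiplication gives `tr (M J M Jᵀ) = 4 (tr AB + tr EF - tr C² - tr D²)`.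
-/

open Matrix

section PosSemidef

variable {n 𝕜 : Type*} [Fintype n] [RCLike 𝕜]

open scoped ComplexOrder in
theorem Matrix.PosSemidef.trace_mul_nonneg {P Q : Matrix n n 𝕜}
    (hP : P.PosSemidef) (hQ : Q.PosSemidef) : 0 ≤ (P * Q).trace := by
  classical
  obtain ⟨X, rfl⟩ : ∃ X : Matrix n n 𝕜, P = star X * X := by
    open scoped MatrixOrder Matrix.Norms.L2Operator in
    exact CStarAlgebra.nonneg_iff_eq_star_mul_self.mp hP.nonneg
  rw [Matrix.mul_assoc, trace_mul_comm]
  exact (hQ.mul_mul_conjTranspose_same X).trace_nonneg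

end PosSemidef

theorem Matrix.trace_fromBlocks {l m α : Type*} [Fintype l] [Fintype m] [AddCommMonoid α]
    (A : Matrix l l α) (B : Matrix l m α) (C : Matrix m l α) (D : Matrix m m α) :
    (fromBlocks A B C D).trace = A.trace + D.trace := by
  simp [trace, Fintype.sum_sum_type]

section BlockRotation

variable {n α : Type*} [Fintype n] [CommRing α]

theorem trace_fromBlocks_mul_antidiagonal_conj (P Q R K : Matrix n n α) (hK : Kᵀ = K) :
    (fromBlocks P Q Qᵀ R *
        (fromBlocks 0 K (-K) 0 * fromBlocks P Q Qᵀ R * (fromBlocks 0 K (-K) 0)ᵀ)).trace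
      = 2 * ((P * K * R * K).trace - (Q * K * Q * K).trace) := by
  have hRP : (R * (K * (P * K))).trace = (P * (K * (R * K))).trace := by
    rw [← Matrix.mul_assoc, trace_mul_comm, Matrix.mul_assoc]
  have hQ : (Qᵀ * (K * (Qᵀ * K))).trace = (Q * (K * (Q * K))).trace := by
    rw [← trace_transpose]
    simp only [transpose_mul, transpose_transpose, hK, Matrix.mul_assoc]
    rw [trace_mul_comm, Matrix.mul_assoc, Matrix.mul_assoc]
  simp only [fromBlocks_transpose, fromBlocks_multiply, transpose_zero, transpose_neg, hK,
    Matrix.mul_zero, Matrix.zero_mul, Matrix.mul_neg, Matrix.neg_mul, add_zero, zero_add, neg_neg,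
    trace_fromBlocks, trace_add, trace_neg, Matrix.mul_assoc, hRP, hQ]
  ring

end BlockRotation

section SignConjugation

variable {n α : Type*} [Fintype n] [DecidableEq n] [CommRing α]

theorem trace_fromBlocks_mul_sign_mul_fromBlocks_mul_sign (A B E F : Matrix n n α) :
    (fromBlocks B (-F) F B * fromBlocks 1 0 0 (-1) * fromBlocks A (-E) E A
        * fromBlocks 1 0 0 (-1)).trace = 2 * ((A * B).trace + (E * F).trace) := by
  simp only [fromBlocks_multiply, Matrix.mul_zero, Matrix.mul_one, Matrix.mul_neg, Matrix.neg_mul,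
    add_zero, zero_add, neg_neg, trace_fromBlocks, trace_add, trace_neg]
  rw [trace_mul_comm B A, trace_mul_comm F E]
  ring

theorem trace_fromBlocks_mul_sign_mul_self_mul_sign (C D : Matrix n n α) :
    (fromBlocks (-C) (-D) D (-C) * fromBlocks 1 0 0 (-1) * fromBlocks (-C) (-D) D (-C)
        * fromBlocks 1 0 0 (-1)).trace = 2 * ((C * C).trace + (D * D).trace) := by
  simp only [fromBlocks_multiply, Matrix.mul_zero, Matrix.mul_one, Matrix.mul_neg, Matrix.neg_mul,
    add_zero, zero_add, neg_neg, trace_fromBlocks, trace_add, trace_neg]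
  ring

end SignConjugation

theorem stmt_0 (k : ℕ) (A B C D E F : Matrix (Fin k) (Fin k) ℝ)
    (hPSD : (Matrix.fromBlocks
      (Matrix.fromBlocks B (-F) F B)
      (Matrix.fromBlocks (-C) (-D) D (-C))
      (Matrix.fromBlocks (-Matrix.transpose C) (Matrix.transpose D) (-Matrix.transpose D) (-Matrix.transpose C))
      (Matrix.fromBlocks A (-E) E A)).PosSemidef) :
    0 ≤ (A * B).trace + (E * F).trace - (C * C).trace - (D * D).trace := by
  set K : Matrix (Fin k ⊕ Fin k) (Fin k ⊕ Fin k) ℝ := fromBlocks 1 0 0 (-1) with hK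
  have hKT : Kᵀ = K := by simp [hK, fromBlocks_transpose]
  have hCD : fromBlocks (-Cᵀ) Dᵀ (-Dᵀ) (-Cᵀ) = (fromBlocks (-C) (-D) D (-C))ᵀ := by
    simp [fromBlocks_transpose]
  rw [hCD] at hPSD
  have hTrace :=
    hPSD.trace_mul_nonneg (hPSD.mul_mul_conjTranspose_same (fromBlocks 0 K (-K) 0))
  rw [conjTranspose_eq_transpose_of_trivial, trace_fromBlocks_mul_antidiagonal_conj _ _ _ _ hKT, hK,
    trace_fromBlocks_mul_sign_mul_fromBlocks_mul_sign,
    trace_fromBlocks_mul_sign_mul_self_mul_sign] at hTrace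
  linarith
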